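/- arXiv:1412.5544 — 11 statements merged into one kernel-verified Lean document; each statement's English description precedes it below -/
import Mathlib

section
/- If I is a nil ideal of a ring R and R/I is weakly nil-clean, then R is weakly nil-clean. -/
/-- A ring is weakly nil-clean if every element is a sum or a difference of a
nilpotent and an idempotent. -/
def IsWeaklyNilClean (R : Type*) [Ring R] : Prop :=
  ∀ a : R, ∃ b e : R, IsNilpotent b ∧ IsIdempotentElem e ∧ (a = b + e ∨ a = b - e)

/-!
Idempotents lift modulo a nil ideal (`exists_isIdempotentElem_eq_of_ker_isNilpotent`), and an
element whose image modulo a nil ideal is nilpotent is itself nilpotent. So if the image of `a`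
is `b ± e` with `b` nilpotent and `e` idempotent, lift `e` to an idempotent `e'`: then `a ∓ e'`
maps to `b`, hence is nilpotent, and `a = (a ∓ e') ± e'`.
-/

theorem IsNilpotent.of_map_of_ker_isNilpotent {R S : Type*} [Semiring R] [Semiring S]
    (f : R →+* S) (hker : ∀ x ∈ RingHom.ker f, IsNilpotent x) {b : R}
    (hb : IsNilpotent (f b)) : IsNilpotent b := by
  obtain ⟨n, hn⟩ := hb
  obtain ⟨m, hm⟩ := hker (b ^ n) (by rw [RingHom.mem_ker, map_pow, hn])
  exact ⟨n * m, by rw [pow_mul, hm]⟩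

theorem IsWeaklyNilClean.of_surjective_of_ker_isNilpotent {R S : Type*} [Ring R] [Ring S]
    (f : R →+* S) (hf : Function.Surjective f) (hker : ∀ x ∈ RingHom.ker f, IsNilpotent x)
    (hS : IsWeaklyNilClean S) : IsWeaklyNilClean R := by
  intro a
  obtain ⟨b, e, hb, he, hab⟩ := hS (f a)
  obtain ⟨e', he', rfl⟩ := exists_isIdempotentElem_eq_of_ker_isNilpotent f hker e (hf e) he
  rcases hab with hab | hab
  · have hnil : IsNilpotent (a - e') :=
      .of_map_of_ker_isNilpotent f hker (by rwa [map_sub, hab, add_sub_cancel_right])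
    exact ⟨a - e', e', hnil, he', .inl (sub_add_cancel a e').symm⟩
  · have hnil : IsNilpotent (a + e') :=
      .of_map_of_ker_isNilpotent f hker (by rwa [map_add, hab, sub_add_cancel])
    exact ⟨a + e', e', hnil, he', .inr (add_sub_cancel_right a e').symm⟩

theorem weaklyNilClean_of_quotient_nil {R : Type*} [Ring R] (I : TwoSidedIdeal R)
    (hnil : ∀ x ∈ I, IsNilpotent x)
    (h : IsWeaklyNilClean I.ringCon.Quotient) : IsWeaklyNilClean R :=
  h.of_surjective_of_ker_isNilpotent I.ringCon.mk' I.ringCon.mk'_surjective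
    fun x hx ↦ hnil x (by rwa [← I.ker_ringCon_mk', TwoSidedIdeal.mem_ker, ← RingHom.mem_ker])
end

section
/- If R is a weakly nil-clean ring, then 6 (i.e., 6·1) is nilpotent in R. -/
theorem Commute.isNilpotent_mul_sub_one_of_isIdempotentElem_sub {R : Type*} [Ring R] {b c : R}
    (hbc : Commute b c) (hb : IsNilpotent b) (he : IsIdempotentElem (c - b)) :
    IsNilpotent (c * (c - 1)) := by
  have key : c * (c - 1) = b * (2 * c - 1 - b) := by
    rw [← sub_eq_zero, ← sub_eq_zero.mpr he.eq]
    simp only [mul_sub, sub_mul, two_mul, mul_add, mul_one, hbc.eq]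
    abel
  rw [key]
  refine Commute.isNilpotent_mul_right ?_ hb
  exact (((Commute.ofNat_right b 2).mul_right hbc).sub_right (Commute.one_right b)).sub_right
    (Commute.refl b)

theorem six_isNilpotent {R : Type*} [Ring R] (h : IsWeaklyNilClean R) :
    IsNilpotent (6 : R) := by
  obtain ⟨b, e, hb, he, h3 | h3⟩ := h 3
  · have he' : IsIdempotentElem ((3 : R) - b) := by rwa [h3, add_sub_cancel_left]
    have h6 := (Commute.ofNat_right b 3).isNilpotent_mul_sub_one_of_isIdempotentElem_sub hb he'
    norm_num at h6
    exact h6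
  · have he' : IsIdempotentElem ((4 : R) - b) := by
      have he_eq : e = b - 3 := by rw [h3, sub_sub_cancel]
      convert he.one_sub using 1
      rw [he_eq, sub_sub_eq_add_sub]
      norm_num
    have h12 := (Commute.ofNat_right b 4).isNilpotent_mul_sub_one_of_isIdempotentElem_sub hb he'
    norm_num at h12
    refine IsNilpotent.of_pow (m := 2) ?_
    rw [show (6 : R) ^ 2 = 3 * 12 by norm_num]
    exact (Commute.ofNat_left 3 12).isNilpotent_mul_left h12
end

section
/- If R is a weakly nil-clean ring, then the Jacobson radical J(R) is nil. -/
/-!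
If `x = b ± e` lies in the Jacobson radical `J`, then `e ≡ ∓b` is nilpotent modulo `J`; being
idempotent it vanishes modulo `J`, so `e ∈ J`. An idempotent of `J` is zero, since `1 - e` is
then a unit with `(1 - e) e = 0`. Hence `x = b` is nilpotent.
-/

namespace TwoSidedIdeal

variable {R : Type*} [Ring R] {I : TwoSidedIdeal R} {e c : R}

lemma mem_of_isIdempotentElem_of_isNilpotent_of_sub_mem (he : IsIdempotentElem e)
    (hc : IsNilpotent c) (hec : e - c ∈ I) : e ∈ I := by
  let π := I.ringCon.mk'
  have hπ : π e = π c := (I.rel_iff e c).mpr hec |> I.ringCon.eq.mpr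
  rw [← ker_ringCon_mk' I, mem_ker]
  exact (he.map π).eq_zero_of_isNilpotent (hπ ▸ hc.map π)

lemma mem_of_isIdempotentElem_of_mem_jacobson (he : IsIdempotentElem e)
    (hJ : e ∈ I.jacobson) : e ∈ I := by
  obtain ⟨z, hz⟩ := mem_jacobson_iff.mp hJ (-1)
  -- `z * (1 - e) ≡ 1` modulo `I`; multiply on the right by `e`
  have hze : (z * -1 * e + z - 1) * e = -e := by
    rw [sub_mul, add_mul, mul_assoc, he.eq]; noncomm_ring
  have := I.mul_mem_right _ e hz
  rwa [hze, neg_mem_iff] at this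

end TwoSidedIdeal

theorem jacobson_nil {R : Type*} [Ring R] (h : IsWeaklyNilClean R) :
    ∀ x ∈ (⊥ : TwoSidedIdeal R).jacobson, IsNilpotent x := by
  intro x hx
  obtain ⟨b, e, hb, he, hx_eq⟩ := h x
  have he_mem : e ∈ (⊥ : TwoSidedIdeal R).jacobson := by
    rcases hx_eq with rfl | rfl
    · exact TwoSidedIdeal.mem_of_isIdempotentElem_of_isNilpotent_of_sub_mem he hb.neg
        (by rwa [sub_neg_eq_add, add_comm])
    · exact TwoSidedIdeal.mem_of_isIdempotentElem_of_isNilpotent_of_sub_mem he hb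
        (by rw [← neg_sub]; exact neg_mem hx)
  have he0 : e = 0 :=
    (TwoSidedIdeal.mem_bot R).mp (TwoSidedIdeal.mem_of_isIdempotentElem_of_mem_jacobson he he_mem)
  rcases hx_eq with rfl | rfl <;> simpa [he0] using hb
end

section
/- A finite direct product R = R₁ × ... × Rₙ of rings (n ≥ 2) is weakly nil-clean if and only if there exists an index k such that R_k is weakly nil-clean and R_j is nil-clean for all j ≠ k. -/
/-- A ring is nil-clean if every element is a sum of a nilpotent and an idempotent. -/
def IsNilClean (R : Type*) [Ring R] : Prop :=
  ∀ a : R, ∃ b e : R, IsNilpotent b ∧ IsIdempotentElem e ∧ a = b + e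

/-! Since `a = b - e` means `-a = (-b) + e`, a ring is weakly nil-clean exactly when, for every
`a`, one of `a` and `-a` is a sum of a nilpotent and an idempotent, and in a finite product this
holds for an element iff it holds for all its components. If two factors `R`, `S` both fail to be
nil-clean, witnessed by `x` and `y`, then neither `(x, -y)` nor `(-x, y)` decomposes, so `R × S`,
a quotient of the product, is not weakly nil-clean. Conversely, if all factors but `R k` are
nil-clean, the sign that works for the `k`-th component of `a` works for all of `a`. -/

theorem isNilpotent_pi_iff {ι : Type*} [Finite ι] {R : ι → Type*} [∀ i, MonoidWithZero (R i)]
    {a : ∀ i, R i} : IsNilpotent a ↔ ∀ i, IsNilpotent (a i) := by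
  refine ⟨fun ⟨m, hm⟩ i => ⟨m, congrFun hm i⟩, fun h => ?_⟩
  cases nonempty_fintype ι
  choose m hm using h
  exact ⟨Finset.univ.sup m, funext fun i =>
    pow_eq_zero_of_le (Finset.le_sup (Finset.mem_univ i)) (hm i)⟩

section NilCleanElem

variable {R S : Type*} [Ring R] [Ring S]

def IsNilCleanElem (a : R) : Prop :=
  ∃ b e : R, IsNilpotent b ∧ IsIdempotentElem e ∧ a = b + e

theorem isNilClean_iff : IsNilClean R ↔ ∀ a : R, IsNilCleanElem a := Iff.rfl

theorem isWeaklyNilClean_iff :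
    IsWeaklyNilClean R ↔ ∀ a : R, IsNilCleanElem a ∨ IsNilCleanElem (-a) := by
  refine forall_congr' fun a => ⟨?_, ?_⟩
  · rintro ⟨b, e, hb, he, rfl | rfl⟩
    · exact .inl ⟨b, e, hb, he, rfl⟩
    · exact .inr ⟨-b, e, hb.neg, he, by abel⟩
  · rintro (⟨b, e, hb, he, rfl⟩ | ⟨b, e, hb, he, hab⟩)
    · exact ⟨b, e, hb, he, .inl rfl⟩
    · exact ⟨-b, e, hb.neg, he, .inr (by rw [← neg_neg a, hab]; abel)⟩

theorem IsNilClean.isWeaklyNilClean (h : IsNilClean R) : IsWeaklyNilClean R :=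
  isWeaklyNilClean_iff.2 fun a => .inl (h a)

theorem IsNilCleanElem.map {a : R} (h : IsNilCleanElem a) (f : R →+* S) :
    IsNilCleanElem (f a) := by
  obtain ⟨b, e, hb, he, rfl⟩ := h
  exact ⟨f b, f e, hb.map f, he.map f, map_add f b e⟩

theorem IsWeaklyNilClean.of_surjective (h : IsWeaklyNilClean R) {f : R →+* S}
    (hf : Function.Surjective f) : IsWeaklyNilClean S := by
  refine isWeaklyNilClean_iff.2 fun s => ?_
  obtain ⟨r, rfl⟩ := hf s
  rw [← map_neg]
  exact (isWeaklyNilClean_iff.1 h r).imp (·.map f) (·.map f)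

theorem IsWeaklyNilClean.isNilClean_or_of_prod (h : IsWeaklyNilClean (R × S)) :
    IsNilClean R ∨ IsNilClean S := by
  simp only [isNilClean_iff, or_iff_not_imp_left, not_forall]
  rintro ⟨x, hx⟩ y
  rcases isWeaklyNilClean_iff.1 h (x, -y) with hxy | hxy
  · exact absurd (hxy.map (RingHom.fst R S)) hx
  · simpa using hxy.map (RingHom.snd R S)

end NilCleanElem

theorem isNilCleanElem_pi_iff {ι : Type*} [Finite ι] {R : ι → Type*} [∀ i, Ring (R i)]
    {a : ∀ i, R i} : IsNilCleanElem a ↔ ∀ i, IsNilCleanElem (a i) := by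
  refine ⟨fun h i => h.map (Pi.evalRingHom R i), fun h => ?_⟩
  choose b e hb he hbe using h
  exact ⟨b, e, isNilpotent_pi_iff.2 hb, funext he, funext hbe⟩

theorem Pi.evalRingHom_prod_surjective {ι : Type*} [DecidableEq ι] (R : ι → Type*)
    [∀ i, Ring (R i)] {j k : ι} (hjk : j ≠ k) :
    Function.Surjective ((Pi.evalRingHom R j).prod (Pi.evalRingHom R k)) := fun ⟨x, y⟩ =>
  ⟨Pi.single j x + Pi.single k y, by simp [hjk, hjk.symm]⟩

theorem IsWeaklyNilClean.pi {ι : Type*} [Finite ι] {R : ι → Type*} [∀ i, Ring (R i)] {k : ι}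
    (hk : IsWeaklyNilClean (R k)) (hj : ∀ j, j ≠ k → IsNilClean (R j)) :
    IsWeaklyNilClean (∀ i, R i) := by
  classical
  refine isWeaklyNilClean_iff.2 fun a => ?_
  have of_apply_k (x : ∀ i, R i) (hx : IsNilCleanElem (x k)) : IsNilCleanElem x :=
    isNilCleanElem_pi_iff.2 fun i => if hi : i = k then hi ▸ hx else hj i hi (x i)
  exact (isWeaklyNilClean_iff.1 hk (a k)).imp (of_apply_k a) (of_apply_k (-a))

theorem pi_weaklyNilClean_iff {n : ℕ} (hn : 2 ≤ n) (R : Fin n → Type*)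
    [∀ i, Ring (R i)] :
    IsWeaklyNilClean (∀ i, R i) ↔
      ∃ k : Fin n, IsWeaklyNilClean (R k) ∧ ∀ j : Fin n, j ≠ k → IsNilClean (R j) := by
  refine ⟨fun h => ?_, fun ⟨k, hk, hj⟩ => hk.pi hj⟩
  by_cases hall : ∀ i, IsNilClean (R i)
  · exact ⟨⟨0, by omega⟩, (hall _).isWeaklyNilClean, fun j _ => hall j⟩
  obtain ⟨k, hk⟩ := not_forall.1 hall
  refine ⟨k, h.of_surjective (f := Pi.evalRingHom R k) (Function.surjective_eval k),
    fun j hjk => ?_⟩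
  exact (h.of_surjective (Pi.evalRingHom_prod_surjective R hjk)).isNilClean_or_of_prod
    |>.resolve_right hk
end

section
/- If R is a weakly nil-clean ring, then R is isomorphic to a direct product R₁ × R₂ where R₁ is nil-clean and R₂ is weakly nil-clean with 3 ∈ J(R₂) (possibly R₂ = 0). -/
universe u

/-
Writing `2 = b + e` or `2 = b - e` with `b` nilpotent, idempotency of `e = ±(2 - b)` turns into
`6 = b * c` with `c` a polynomial in `b`, so `6` is nilpotent. Bézout for `2 ^ n` and `3 ^ n`
gives an integer idempotent, central because it is an integer, splitting `R` into a factor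
where `2` is nilpotent and one where `3` is. In the first, `b - e = (b - 2 * e) + e` with
`b - 2 * e` nilpotent, so the ring is nil-clean; in the second, `3` is central and nilpotent,
hence in the Jacobson radical.
-/

section

variable {R : Type u} [Ring R]

theorem IsNilpotent.add_mul_of_forall_commute {b c : R} (hb : IsNilpotent b) (hc : IsNilpotent c)
    (hc_comm : ∀ y, Commute c y) (r : R) : IsNilpotent (b + c * r) := by
  have pow_mem : ∀ k : ℕ, ∃ s, (b + c * r) ^ k = b ^ k + c * s := by
    intro k
    induction k with
    | zero => exact ⟨0, by simp⟩
    | succ k ih =>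
      obtain ⟨s, hs⟩ := ih
      refine ⟨b ^ k * r + s * (b + c * r), ?_⟩
      rw [_root_.pow_succ, hs, _root_.pow_succ, add_mul, mul_add, ← mul_assoc (b ^ k) c,
        ← (hc_comm _).eq]
      noncomm_ring
  obtain ⟨m, hm⟩ := hb
  obtain ⟨s, hs⟩ := pow_mem m
  rw [hm, zero_add] at hs
  obtain ⟨k, hk⟩ := (hc_comm s).isNilpotent_mul_right hc
  exact ⟨m * k, by rw [pow_mul, hs, hk]⟩

theorem TwoSidedIdeal.mem_jacobson_bot_of_isNilpotent {x : R} (hx : IsNilpotent x)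
    (hx_comm : ∀ y, Commute x y) : x ∈ (⊥ : TwoSidedIdeal R).jacobson := by
  rw [TwoSidedIdeal.mem_jacobson_iff]
  intro y
  obtain ⟨z, hz⟩ := ((hx_comm y).symm.isNilpotent_mul_left hx).isUnit_add_one.exists_left_inv
  refine ⟨z, ?_⟩
  rw [TwoSidedIdeal.mem_bot, ← hz]
  noncomm_ring

theorem exists_ringEquiv_prod_of_intCast_mul_eq_zero {a b : ℤ} (hab : IsCoprime a b)
    (h : ((a * b : ℤ) : R) = 0) :
    ∃ (R₁ R₂ : Type u) (_ : Ring R₁) (_ : Ring R₂) (_ : R ≃+* R₁ × R₂),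
      (a : R₁) = 0 ∧ (b : R₂) = 0 := by
  obtain ⟨u, v, huv⟩ := hab
  set e : R := ((v * b : ℤ) : R)
  have he_compl : 1 - e = ((u * a : ℤ) : R) := by
    rw [sub_eq_iff_eq_add, ← Int.cast_add, huv, Int.cast_one]
  have he : IsIdempotentElem e := by
    rw [isIdempotentElem_iff_mul_one_sub_self, he_compl, ← Int.cast_mul,
      show v * b * (u * a) = v * u * (a * b) by ring, Int.cast_mul, h, mul_zero]
  have hE := CompleteOrthogonalIdempotents.of_isIdempotentElem he
  have hE_central : ∀ i, IsMulCentral (![e, 1 - e] i) := by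
    refine Fin.forall_fin_two.mpr ⟨Set.intCast_mem_center R _, ?_⟩
    show IsMulCentral (1 - e)
    rw [he_compl]
    exact Set.intCast_mem_center R _
  set f := (hE.ringEquivOfIsMulCentral hE_central).trans (RingEquiv.piFinTwo _)
  refine ⟨_, _, _, _, f, ?_, ?_⟩
  · rw [← Prod.fst_intCast (β := (hE.idem 1).Corner), ← map_intCast f a]
    apply Subtype.ext
    show ((v * b : ℤ) : R) * a * e = 0
    rw [← Int.cast_mul, show v * b * a = v * (a * b) by ring, Int.cast_mul, h, mul_zero, zero_mul]
  · rw [← Prod.snd_intCast (α := (hE.idem 0).Corner), ← map_intCast f b]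
    apply Subtype.ext
    show (1 - e) * (b : R) * (1 - e) = 0
    rw [he_compl, ← Int.cast_mul, show u * a * b = u * (a * b) by ring, Int.cast_mul, h, mul_zero,
      zero_mul]

namespace IsWeaklyNilClean

theorem of_surjective_s7 {S : Type*} [Ring S] (h : IsWeaklyNilClean R) (f : R →+* S)
    (hf : Function.Surjective f) : IsWeaklyNilClean S := by
  intro a
  obtain ⟨x, rfl⟩ := hf a
  obtain ⟨b, e, hb, he, hx | hx⟩ := h x
  · exact ⟨f b, f e, hb.map f, he.map f, .inl (by rw [hx, map_add])⟩
  · exact ⟨f b, f e, hb.map f, he.map f, .inr (by rw [hx, map_sub])⟩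

theorem isNilpotent_six (h : IsWeaklyNilClean R) : IsNilpotent (6 : R) := by
  obtain ⟨b, e, hb, he, h2 | h2⟩ := h 2
  · obtain rfl : e = 2 - b := by rw [h2]; abel
    have h6 : (6 : R) = b * ((3 - b) * 3) + ((2 - b) * (2 - b) - (2 - b)) * 3 := by
      noncomm_ring; norm_num
    rw [he.eq, sub_self, zero_mul, add_zero] at h6
    rw [h6]
    exact (((Commute.ofNat_right b 3).sub_right (.refl b)).mul_right
      (Commute.ofNat_right b 3)).isNilpotent_mul_right hb
  · obtain rfl : e = b - 2 := by rw [h2]; abel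
    have h6 : (6 : R) = b * (5 - b) + ((b - 2) * (b - 2) - (b - 2)) := by
      noncomm_ring; norm_num
    rw [he.eq, sub_self, add_zero] at h6
    rw [h6]
    exact ((Commute.ofNat_right b 5).sub_right (.refl b)).isNilpotent_mul_right hb

theorem isNilClean_of_isNilpotent_two (h : IsWeaklyNilClean R) (h2 : IsNilpotent (2 : R)) :
    IsNilClean R := by
  intro a
  obtain ⟨b, e, hb, he, ha | ha⟩ := h a
  · exact ⟨b, e, hb, he, ha⟩
  · refine ⟨b + 2 * -e, e, hb.add_mul_of_forall_commute h2 (Commute.ofNat_left 2) (-e), he, ?_⟩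
    rw [ha]
    noncomm_ring

end IsWeaklyNilClean

end

theorem weaklyNilClean_decomposition {R : Type u} [Ring R] (h : IsWeaklyNilClean R) :
    ∃ (R₁ R₂ : Type u) (_ : Ring R₁) (_ : Ring R₂),
      Nonempty (R ≃+* R₁ × R₂) ∧ IsNilClean R₁ ∧ IsWeaklyNilClean R₂ ∧
        (3 : R₂) ∈ (⊥ : TwoSidedIdeal R₂).jacobson := by
  obtain ⟨n, h6⟩ := h.isNilpotent_six
  have hcop : IsCoprime ((2 : ℤ) ^ n) (3 ^ n) :=
    (Int.isCoprime_iff_gcd_eq_one.mpr rfl).pow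
  have h23 : ((2 ^ n * 3 ^ n : ℤ) : R) = 0 := by
    push_cast
    rw [← (Commute.ofNat_right (2 : R) 3).mul_pow]
    norm_num [h6]
  obtain ⟨R₁, R₂, _, _, f, h2, h3⟩ := exists_ringEquiv_prod_of_intCast_mul_eq_zero hcop h23
  have hW₁ := h.of_surjective_s7 ((RingHom.fst R₁ R₂).comp f) (Prod.fst_surjective.comp f.surjective)
  have hW₂ := h.of_surjective_s7 ((RingHom.snd R₁ R₂).comp f) (Prod.snd_surjective.comp f.surjective)
  refine ⟨R₁, R₂, _, _, ⟨f⟩, hW₁.isNilClean_of_isNilpotent_two ⟨n, by exact_mod_cast h2⟩, hW₂,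
    TwoSidedIdeal.mem_jacobson_bot_of_isNilpotent ⟨n, by exact_mod_cast h3⟩ (Commute.ofNat_left 3)⟩
end

section
/- A ring R satisfies the nil-involution property if and only if R is weakly nil-clean and 2 is a unit in R. -/
section

variable {R : Type*} [Ring R]

def IsNilInvolutionSum (a : R) : Prop :=
  ∃ u v : R, a = u + v ∧ v ^ 2 = 1 ∧ ∃ b : R, IsNilpotent b ∧ (u = b + 1 ∨ u = b - 1)

def IsWeaklyNilCleanElem (a : R) : Prop :=
  ∃ b e : R, IsNilpotent b ∧ IsIdempotentElem e ∧ (a = b + e ∨ a = b - e)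

theorem IsIdempotentElem.two_mul_sub_one_sq {e : R} (he : IsIdempotentElem e) :
    (2 * e - 1) ^ 2 = 1 := by
  calc (2 * e - 1) ^ 2 = 4 * (e * e) - 4 * e + 1 := by noncomm_ring
    _ = 1 := by rw [he.eq]; noncomm_ring

theorem isIdempotentElem_invOf_two_mul_one_add [Invertible (2 : R)] {v : R} (hv : v ^ 2 = 1) :
    IsIdempotentElem (⅟2 * (1 + v)) := by
  have hsq : (1 + v) * (1 + v) = 2 * (1 + v) := by
    calc (1 + v) * (1 + v) = 1 + 2 * v + v ^ 2 := by noncomm_ring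
      _ = 2 * (1 + v) := by rw [hv]; noncomm_ring
  have hcomm : (1 + v) * ⅟2 = ⅟2 * (1 + v) := ((Commute.ofNat_left 2 (1 + v)).invOf_left).eq.symm
  calc ⅟2 * (1 + v) * (⅟2 * (1 + v)) = ⅟2 * ((1 + v) * ⅟2 * (1 + v)) := by simp only [mul_assoc]
    _ = ⅟2 * (1 + v) := by rw [hcomm, mul_assoc, hsq, invOf_mul_cancel_left]

theorem IsNilpotent.isUnit_of_add_eq_of_commute {b v c : R} (hb : IsNilpotent b) (hv : IsUnit v)
    (hc : Commute b c) (h : b + v = c) : IsUnit c := by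
  have hbv : Commute b v := by
    rw [eq_sub_of_add_eq' h]
    exact hc.sub_right (Commute.refl b)
  exact h ▸ hb.isUnit_add_right_of_commute hv hbv

theorem IsNilInvolutionSum.isUnit_two (h : IsNilInvolutionSum (1 : R)) : IsUnit (2 : R) := by
  obtain ⟨u, v, h1, hv, b, hb, hu⟩ := h
  have hv_unit : IsUnit v := IsUnit.of_pow_eq_one hv two_ne_zero
  rcases hu with rfl | rfl
  · have hbv : b + v = 0 := calc
      b + v = b + 1 + v - 1 := by abel
      _ = 0 := by rw [← h1, sub_self]
    have h0 := hb.isUnit_of_add_eq_of_commute hv_unit (Commute.zero_right b) hbv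
    have := subsingleton_of_zero_eq_one (isUnit_zero_iff.mp h0)
    exact isUnit_of_subsingleton _
  · have hbv : b + v = 2 := calc
      b + v = b - 1 + v + 1 := by abel
      _ = 2 := by rw [← h1, one_add_one_eq_two]
    exact hb.isUnit_of_add_eq_of_commute hv_unit (Commute.ofNat_right b 2) hbv

theorem IsWeaklyNilCleanElem.isNilInvolutionSum_two_mul {a : R} (h : IsWeaklyNilCleanElem a) :
    IsNilInvolutionSum (2 * a) := by
  obtain ⟨b, e, hb, he, rfl | rfl⟩ := h
  · exact ⟨2 * b + 1, 2 * e - 1, by noncomm_ring, he.two_mul_sub_one_sq, 2 * b,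
      (Commute.ofNat_left 2 b).isNilpotent_mul_left hb, .inl rfl⟩
  · exact ⟨2 * b - 1, 1 - 2 * e, by noncomm_ring, by rw [← neg_sub, neg_sq, he.two_mul_sub_one_sq],
      2 * b, (Commute.ofNat_left 2 b).isNilpotent_mul_left hb, .inr rfl⟩

theorem IsNilInvolutionSum.isWeaklyNilCleanElem_invOf_two_mul [Invertible (2 : R)] {a : R}
    (h : IsNilInvolutionSum a) : IsWeaklyNilCleanElem (⅟2 * a) := by
  obtain ⟨u, v, rfl, hv, b, hb, rfl | rfl⟩ := h
  · refine ⟨⅟2 * b, ⅟2 * (1 + v), (Commute.ofNat_left 2 b).invOf_left.isNilpotent_mul_left hb,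
      isIdempotentElem_invOf_two_mul_one_add hv, .inl ?_⟩
    noncomm_ring
  · refine ⟨⅟2 * b, ⅟2 * (1 + -v), (Commute.ofNat_left 2 b).invOf_left.isNilpotent_mul_left hb,
      isIdempotentElem_invOf_two_mul_one_add (by rwa [neg_sq]), .inr ?_⟩
    noncomm_ring

end

theorem nilInvolution_iff {R : Type*} [Ring R] :
    (∀ a : R, ∃ u v : R, a = u + v ∧ v ^ 2 = 1 ∧
        ∃ b : R, IsNilpotent b ∧ (u = b + 1 ∨ u = b - 1)) ↔
      IsWeaklyNilClean R ∧ IsUnit (2 : R) := by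
  constructor
  · intro H
    have h2 : IsUnit (2 : R) := IsNilInvolutionSum.isUnit_two (H 1)
    let := h2.invertible
    refine ⟨fun a => ?_, h2⟩
    have ha := IsNilInvolutionSum.isWeaklyNilCleanElem_invOf_two_mul (H (2 * a))
    rwa [invOf_mul_cancel_left] at ha
  · rintro ⟨hR, h2⟩ a
    let := h2.invertible
    have ha := IsWeaklyNilCleanElem.isNilInvolutionSum_two_mul (hR (⅟2 * a))
    rwa [mul_invOf_cancel_left] at ha
end

section
/- Every weakly nil-clean ring is clean, i.e., every element is a sum of a unit and an idempotent. -/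
section

variable {R : Type*} [Ring R]

theorem isNilpotent_mul_add_one_of_isIdempotentElem_sub {n k : R} (hnk : Commute n k)
    (hn : IsNilpotent n) (he : IsIdempotentElem (n - k)) : IsNilpotent (k * (k + 1)) := by
  have key : k * (k + 1) = n * (2 * k + 1 - n) := by
    rw [← sub_eq_zero]
    calc k * (k + 1) - n * (2 * k + 1 - n)
        = ((n - k) * (n - k) - (n - k)) + (k * n - n * k) := by noncomm_ring
      _ = 0 := by rw [he.eq, hnk.eq, sub_self, sub_self, add_zero]
  rw [key]
  refine Commute.isNilpotent_mul_right ?_ hn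
  exact (((Commute.ofNat_right n 2).mul_right hnk).add_right (Commute.one_right n)).sub_right
    (Commute.refl n)

theorem IsWeaklyNilClean.isNilpotent_six_s9 (h : IsWeaklyNilClean R) : IsNilpotent (6 : R) := by
  obtain ⟨n, e, hn, he, h2 | h2⟩ := h 2
  · have h2n : IsNilpotent ((1 : R) * (1 + 1)) := by
      refine isNilpotent_mul_add_one_of_isIdempotentElem_sub (Commute.one_right n) hn ?_
      rwa [eq_sub_of_add_eq h2.symm, sub_right_comm, show (2 : R) - 1 = 1 by norm_num,
        IsIdempotentElem.one_sub_iff]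
    rw [one_mul, one_add_one_eq_two] at h2n
    rw [show (6 : R) = 3 * 2 by norm_num]
    exact (Commute.ofNat_left 3 2).isNilpotent_mul_left h2n
  · have h6 := isNilpotent_mul_add_one_of_isIdempotentElem_sub (Commute.ofNat_right n 2) hn
      (by rwa [h2, sub_sub_cancel])
    norm_num at h6
    exact h6

theorem exists_isIdempotentElem_intCast_of_isNilpotent_mul {p q : ℤ} (hpq : IsCoprime p q)
    (h : IsNilpotent ((p * q : ℤ) : R)) :
    ∃ c : ℤ, IsIdempotentElem (c : R) ∧ IsNilpotent ((p : R) * c) ∧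
      IsNilpotent ((q : R) * (1 - c)) := by
  obtain ⟨k, hk⟩ := h
  obtain ⟨x, y, hxy⟩ := hpq.pow (m := k + 1) (n := k + 1)
  have hvanish : ∀ z : ℤ, ((z * (p * q) ^ (k + 1) : ℤ) : R) = 0 := by
    intro z
    rw [Int.cast_mul, Int.cast_pow, pow_succ, hk, zero_mul, mul_zero]
  have hc : IsIdempotentElem ((y * q ^ (k + 1) : ℤ) : R) := by
    rw [IsIdempotentElem, ← Int.cast_mul, ← sub_eq_zero, ← Int.cast_sub]
    convert hvanish (-(x * y)) using 2
    linear_combination (y * q ^ (k + 1)) * hxy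
  have hd : (1 : R) - (y * q ^ (k + 1) : ℤ) = (x * p ^ (k + 1) : ℤ) := by
    rw [← Int.cast_one, ← Int.cast_sub, ← hxy, add_sub_cancel_right]
  have hd_idem : IsIdempotentElem ((x * p ^ (k + 1) : ℤ) : R) := hd ▸ hc.one_sub
  refine ⟨y * q ^ (k + 1), hc, ⟨k + 1, ?_⟩, ⟨k + 1, ?_⟩⟩
  · rw [(Int.cast_commute _ _).mul_pow, hc.pow_succ_eq, ← Int.cast_pow, ← Int.cast_mul]
    convert hvanish y using 2
    ring
  · rw [hd, (Int.cast_commute _ _).mul_pow, hd_idem.pow_succ_eq, ← Int.cast_pow,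
      ← Int.cast_mul]
    convert hvanish x using 2
    ring

theorem isUnit_add_mul_of_isNilpotent {u z : R} (hu : IsUnit u) (hz : ∀ r, Commute z r)
    (hzn : IsNilpotent z) (y : R) : IsUnit (u + z * y) := by
  obtain ⟨u, rfl⟩ := hu
  have hfactor : (u : R) + z * y = u * (1 + z * (↑u⁻¹ * y)) := by
    rw [mul_add, mul_one, ← mul_assoc, ← (hz u).eq, mul_assoc, u.mul_inv_cancel_left]
  rw [hfactor]
  exact u.isUnit.mul ((hz _).isNilpotent_mul_right hzn).isUnit_one_add

theorem isIdempotentElem_mul_one_sub_add_one_sub_mul {c g : R} (hc : ∀ r, Commute c r)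
    (hcc : IsIdempotentElem c) (hg : IsIdempotentElem g) :
    IsIdempotentElem (c * (1 - g) + (1 - c) * g) := by
  have hdc : ∀ r, Commute (1 - c) r := fun r ↦ (Commute.one_left r).sub_left (hc r)
  refine (hcc.mul_of_commute (hc _) hg.one_sub).add
    ((hcc.one_sub).mul_of_commute (hdc g) hg) ?_
  have h12 : c * (1 - g) * ((1 - c) * g) = 0 := by
    rw [(hdc g).eq, mul_assoc, ← mul_assoc (1 - g), hg.one_sub_mul_self, zero_mul, mul_zero]
  have h21 : (1 - c) * g * (c * (1 - g)) = 0 := by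
    rw [(hc (1 - g)).eq, mul_assoc, ← mul_assoc g, hg.mul_one_sub_self, zero_mul, mul_zero]
  rw [h12, h21, add_zero]

theorem exists_isUnit_isIdempotentElem_sub_sub_one {c m g : R} (hc : ∀ r, Commute c r)
    (hcc : IsIdempotentElem c) (hz : IsNilpotent (2 + c)) (hm : IsNilpotent m)
    (hg : IsIdempotentElem g) :
    ∃ u e, IsUnit u ∧ IsIdempotentElem e ∧ m - g - 1 = u + e := by
  set f := c * (1 - g) + (1 - c) * g
  have hinv : (2 * c - 1) * (2 * c - 1) = 1 := by
    calc (2 * c - 1) * (2 * c - 1) = 4 * (c * c - c) + 1 := by noncomm_ring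
      _ = 1 := by rw [hcc.eq, sub_self, mul_zero, zero_add]
  have hunit : IsUnit (2 * c - 1 + m) :=
    hm.isUnit_add_left_of_commute ⟨⟨_, _, hinv, hinv⟩, rfl⟩
      (((Commute.ofNat_right m 2).mul_right (hc m).symm).sub_right (Commute.one_right m))
  have hsplit : m - g - 1 - f = 2 * c - 1 + m + (2 + c) * -(c + (1 - c) * g) := by
    rw [← sub_eq_zero]
    calc m - g - 1 - f - (2 * c - 1 + m + (2 + c) * -(c + (1 - c) * g))
        = (c * c - c) * (1 - g) := by simp only [f]; noncomm_ring
      _ = 0 := by rw [hcc.eq, sub_self, zero_mul]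
  have hzc : ∀ r, Commute (2 + c) r := fun r ↦ (Commute.ofNat_left 2 r).add_left (hc r)
  exact ⟨m - g - 1 - f, f, hsplit ▸ isUnit_add_mul_of_isNilpotent hunit hzc hz _,
    isIdempotentElem_mul_one_sub_add_one_sub_mul hc hcc hg, (sub_add_cancel _ _).symm⟩

end

theorem weaklyNilClean_isClean {R : Type*} [Ring R] (h : IsWeaklyNilClean R) :
    ∀ a : R, ∃ u e : R, IsUnit u ∧ IsIdempotentElem e ∧ a = u + e := by
  obtain ⟨c, hc, h3c, h2c⟩ := exists_isIdempotentElem_intCast_of_isNilpotent_mul (R := R)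
    (p := 3) (q := 2) ⟨1, -1, by norm_num⟩ (by exact_mod_cast h.isNilpotent_six_s9)
  have hz : IsNilpotent ((2 + c : ℤ) : R) := by
    rw [show 2 + c = 3 * c + 2 * (1 - c) by ring, Int.cast_add]
    exact (Int.cast_commute _ _).isNilpotent_add (by exact_mod_cast h3c) (by exact_mod_cast h2c)
  intro a
  obtain ⟨m, g, hm, hg, ha | ha⟩ := h (a + 1)
  · exact ⟨m - 1, g, hm.isUnit_sub_one, hg, by rw [eq_sub_of_add_eq ha, sub_add_eq_add_sub]⟩
  · rw [eq_sub_of_add_eq ha]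
    exact exists_isUnit_isIdempotentElem_sub_sub_one (Int.cast_commute c) hc
      (by exact_mod_cast hz) hm hg
end

section
/- The center of a weakly nil-clean ring is weakly nil-clean. More precisely, if R is weakly nil-clean and a ∈ Z(R), then there exist a central idempotent e and a central nilpotent b with a = b + e or a = b - e. -/
/-!
Write `a = b + e` (the case `a = b - e` is the case `-a = -b + e`). For every `x`, the corner
elements `y = e x (1 - e)` and `y = (1 - e) x e` commute with the central `a`, which turns into
`b y - y b = ∓ y`: each is a fixed point of `± ad b`, a nilpotent map, hence `0`. Since
`x e - e x` is the difference of these two corners, `e` is central, and then so is `b = a - e`.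
-/

theorem Module.End.eq_zero_of_isNilpotent_of_apply_eq_self {R M : Type*} [Semiring R]
    [AddCommMonoid M] [Module R M] {f : Module.End R M} (hf : IsNilpotent f) {y : M}
    (hy : f y = y) : y = 0 := by
  obtain ⟨n, hn⟩ := hf
  calc y = (f ^ n) y := by rw [Module.End.pow_apply, Function.iterate_fixed hy]
    _ = 0 := by rw [hn, LinearMap.zero_apply]

section Ring

variable {R : Type*} [Ring R]

theorem eq_zero_of_isNilpotent_of_mul_sub_mul_eq_self {b y : R} (hb : IsNilpotent b)
    (hy : b * y - y * b = y) : y = 0 :=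
  Module.End.eq_zero_of_isNilpotent_of_apply_eq_self
    (LieAlgebra.ad_nilpotent_of_nilpotent (R := ℤ) hb) <| by
      rwa [LieAlgebra.ad_apply, Ring.lie_def]

theorem eq_zero_of_isNilpotent_of_commute_add {b e y : R} (hb : IsNilpotent b)
    (hc : Commute (b + e) y) (hy : y * e - e * y = y) : y = 0 := by
  refine eq_zero_of_isNilpotent_of_mul_sub_mul_eq_self hb ?_
  have hc' : b * y + e * y = y * b + y * e := by simpa only [add_mul, mul_add] using hc.eq
  exact (sub_eq_sub_iff_add_eq_add.mpr (hc'.trans (add_comm _ _))).trans hy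

theorem IsIdempotentElem.mem_center_of_isNilpotent_of_add_mem_center {b e : R}
    (he : IsIdempotentElem e) (hb : IsNilpotent b) (hbe : b + e ∈ Set.center R) :
    e ∈ Set.center R := by
  rw [Semigroup.mem_center_iff] at hbe ⊢
  intro x
  have hleft : e * x * (1 - e) = 0 := by
    refine eq_zero_of_isNilpotent_of_commute_add (e := -e) hb.neg ?_ ?_
    · rw [← neg_add]
      exact Commute.neg_left (hbe _).symm
    · simp [mul_sub, sub_mul, ← mul_assoc, he.eq, he.mul_mul_self, neg_add_eq_sub]
  have hright : (1 - e) * x * e = 0 := by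
    refine eq_zero_of_isNilpotent_of_commute_add hb (hbe _).symm ?_
    simp [mul_sub, sub_mul, ← mul_assoc, he.eq, he.mul_mul_self]
  have hcorners : x * e - e * x = (1 - e) * x * e - e * x * (1 - e) := by noncomm_ring
  rwa [hleft, hright, sub_zero, sub_eq_zero] at hcorners

end Ring

theorem center_weaklyNilClean {R : Type*} [Ring R] (h : IsWeaklyNilClean R)
    (a : R) (ha : a ∈ Set.center R) :
    ∃ b e : R, b ∈ Set.center R ∧ e ∈ Set.center R ∧ IsNilpotent b ∧
      IsIdempotentElem e ∧ (a = b + e ∨ a = b - e) := by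
  obtain ⟨b, e, hb, he, hab | hab⟩ := h a
  · have heZ := he.mem_center_of_isNilpotent_of_add_mem_center hb (hab ▸ ha)
    refine ⟨b, e, ?_, heZ, hb, he, .inl hab⟩
    simpa [hab] using Set.add_mem_center ha (Set.neg_mem_center heZ)
  · have heZ := he.mem_center_of_isNilpotent_of_add_mem_center hb.neg
      (by simpa [hab, neg_add_eq_sub] using Set.neg_mem_center ha)
    refine ⟨b, e, ?_, heZ, hb, he, .inr hab⟩
    simpa [hab] using Set.add_mem_center ha heZ
end

section
/- Every reduced weakly nil-clean ring is commutative. -/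
theorem IsReduced.eq_zero_of_mul_self_eq_zero {R : Type*} [MonoidWithZero R] [IsReduced R]
    {a : R} (h : a * a = 0) : a = 0 :=
  IsNilpotent.eq_zero ⟨2, by rw [pow_two, h]⟩

theorem IsIdempotentElem.commute_of_isReduced {R : Type*} [Ring R] [IsReduced R] {e : R}
    (he : IsIdempotentElem e) (x : R) : Commute e x := by
  have hcompl : (1 - e) * e = 0 := by rw [sub_mul, one_mul, he.eq, sub_self]
  have hcompl' : e * (1 - e) = 0 := by rw [mul_sub, mul_one, he.eq, sub_self]
  have left : e * x * (1 - e) = 0 := IsReduced.eq_zero_of_mul_self_eq_zero <| by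
    simp only [mul_assoc, ← mul_assoc (1 - e) e, hcompl, zero_mul, mul_zero]
  have right : (1 - e) * x * e = 0 := IsReduced.eq_zero_of_mul_self_eq_zero <| by
    simp only [mul_assoc, ← mul_assoc e (1 - e), hcompl', zero_mul, mul_zero]
  have hex : e * x = e * x * e := by
    rwa [mul_sub, mul_one, sub_eq_zero] at left
  have hxe : x * e = e * x * e := by
    rwa [mul_assoc, sub_mul, one_mul, sub_eq_zero, ← mul_assoc] at right
  exact hex.trans hxe.symm

theorem IsWeaklyNilClean.exists_isIdempotentElem_eq_or_eq_neg {R : Type*} [Ring R]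
    [IsReduced R] (h : IsWeaklyNilClean R) (a : R) :
    ∃ e : R, IsIdempotentElem e ∧ (a = e ∨ a = -e) := by
  obtain ⟨b, e, hb, he, hae⟩ := h a
  rw [hb.eq_zero, zero_add, zero_sub] at hae
  exact ⟨e, he, hae⟩

theorem reduced_weaklyNilClean_commutative {R : Type*} [Ring R] [IsReduced R]
    (h : IsWeaklyNilClean R) : ∀ x y : R, x * y = y * x := by
  intro x y
  obtain ⟨e, he, rfl | rfl⟩ := h.exists_isIdempotentElem_eq_or_eq_neg x
  · exact he.commute_of_isReduced y
  · exact (he.commute_of_isReduced y).neg_left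
end

section
/- Every weakly nil-clean element of an abelian ring is strongly π-regular: if r = b ± e with b nilpotent, e idempotent, and all idempotents of R central, then r^n ∈ r^(n+1)R ∩ R r^(n+1) for some n ≥ 1. -/
/-!
If `e` is an idempotent commuting with a nilpotent `b`, then `r = b + e` acts on the corner `eR`
as the unit `(b + 1) e` and on `(1 - e)R` as the nilpotent `b (1 - e)`. Hence `r ^ n = r ^ n e` once
`b ^ n = 0`, and `e (b + 1)⁻¹` is an inverse of `r` on `eR`, which gives `r ^ n ∈ r ^ (n + 1) R`
and symmetrically `r ^ n ∈ R r ^ (n + 1)`. The case `r = b - e = -(-b + e)` follows because strong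
π-regularity is preserved by negation.
-/

section

variable {R : Type*} [Ring R]

def IsStronglyPiRegular (r : R) : Prop :=
  ∃ n : ℕ, 1 ≤ n ∧ (∃ s : R, r ^ n = r ^ (n + 1) * s) ∧ ∃ t : R, r ^ n = t * r ^ (n + 1)

theorem IsStronglyPiRegular.neg {r : R} (hr : IsStronglyPiRegular r) :
    IsStronglyPiRegular (-r) := by
  obtain ⟨n, hn, ⟨s, hs⟩, ⟨t, ht⟩⟩ := hr
  refine ⟨n, hn, ⟨-s, ?_⟩, ⟨-t, ?_⟩⟩
  · rw [pow_succ, mul_assoc, neg_mul_neg, neg_pow r n, mul_assoc, ← mul_assoc (r ^ n), ← pow_succ,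
      ← hs]
  · rw [pow_succ', ← mul_assoc, neg_mul_neg, neg_pow' r n, ← mul_assoc, mul_assoc t, ← pow_succ',
      ← ht]

theorem isStronglyPiRegular_add_of_commute {b e : R} (hb : IsNilpotent b)
    (he : IsIdempotentElem e) (hbe : Commute b e) : IsStronglyPiRegular (b + e) := by
  set r := b + e
  obtain ⟨u, hu⟩ := hb.isUnit_add_one
  obtain ⟨n, hn, hbn⟩ : ∃ n, n ≠ 0 ∧ b ^ n = 0 := by
    obtain ⟨m, hm⟩ := hb
    exact ⟨m + 1, m.succ_ne_zero, by rw [pow_succ, hm, zero_mul]⟩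
  have her : Commute e r := hbe.symm.add_right (Commute.refl e)
  have heu : Commute e u := hu ▸ hbe.symm.add_right (Commute.one_right e)
  have hre : r * e = u * e := by rw [hu, add_mul, he.eq, add_mul, one_mul]
  have hrf : r * (1 - e) = b * (1 - e) := by rw [add_mul, he.mul_one_sub_self, add_zero]
  have hr_pow : r ^ n * e = r ^ n := by
    have hvanish : r ^ n * (1 - e) = 0 := by
      rw [← he.one_sub.pow_eq hn, ← ((Commute.one_right r).sub_right her.symm).mul_pow, hrf,
        ((Commute.one_right b).sub_right hbe).mul_pow, hbn, zero_mul]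
    rwa [mul_sub, mul_one, sub_eq_zero, eq_comm] at hvanish
  have hright : r * (e * ↑u⁻¹) = e := by
    rw [← mul_assoc, hre, ← heu.eq, mul_assoc, u.mul_inv, mul_one]
  have hleft : (↑u⁻¹ * e) * r = e := by
    rw [mul_assoc, her.eq, hre, ← mul_assoc, u.inv_mul, one_mul]
  refine ⟨n, Nat.one_le_iff_ne_zero.mpr hn, ⟨e * ↑u⁻¹, ?_⟩, ⟨↑u⁻¹ * e, ?_⟩⟩
  · rw [pow_succ, mul_assoc, hright, hr_pow]
  · rw [pow_succ', ← mul_assoc, hleft, (her.pow_right _).eq, hr_pow]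

end

theorem weaklyNilClean_element_strongly_pi_regular {R : Type*} [Ring R]
    (hab : ∀ e : R, IsIdempotentElem e → e ∈ Set.center R)
    (r b e : R) (hb : IsNilpotent b) (he : IsIdempotentElem e)
    (hr : r = b + e ∨ r = b - e) :
    ∃ n : ℕ, 1 ≤ n ∧ (∃ s : R, r ^ n = r ^ (n + 1) * s) ∧
      (∃ t : R, r ^ n = t * r ^ (n + 1)) := by
  have hbe : Commute b e := ((Set.mem_center_iff.mp (hab e he)).comm b).symm
  rcases hr with rfl | rfl
  · exact isStronglyPiRegular_add_of_commute hb he hbe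
  · have hneg := (isStronglyPiRegular_add_of_commute hb.neg he hbe.neg_left).neg
    rwa [neg_add, neg_neg, ← sub_eq_add_neg] at hneg
end

section
/- Let D be a division ring and n ≥ 1. If the matrix ring Mₙ(D) is weakly nil-clean, then D has at most 3 elements. -/
open Pointwise Matrix

theorem IsNilpotent.eq_zero_of_subset_smul {R : Type*} [Ring R] {b : R} (hb : IsNilpotent b)
    {S : Set R} (hS : S ⊆ b • S) {y : R} (hy : y ∈ S) : y = 0 := by
  obtain ⟨m, hm⟩ := hb
  have hpow : ∀ k : ℕ, S ⊆ b ^ k • S := by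
    intro k
    induction k with
    | zero => simp
    | succ k ih => exact hS.trans (by rw [pow_succ', mul_smul]; exact Set.smul_set_mono ih)
  exact Set.zero_smul_set_subset S (hm ▸ hpow m hy)

section Corner

variable {R : Type*} [Ring R] {e x b : R}

theorem mul_self_mul_eq_of_isIdempotentElem_sub (hxe : x * e = x)
    (hf : IsIdempotentElem (x - b)) :
    b * b * e = x - x * x + x * b * e + b * (x - e) := by
  have h : (x - b) * (x - b) * e = (x - b) * e := congrArg (· * e) hf.eq
  calc b * b * e = (x - b) * (x - b) * e - x * (x * e) + x * b * e + b * (x * e) := by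
        noncomm_ring
    _ = x - x * x + x * b * e + b * (x - e) := by rw [h, sub_mul, hxe]; noncomm_ring

variable (hxe : x * e = x) (hb : IsNilpotent b) (hf : IsIdempotentElem (x - b))
include hxe hb hf

theorem eq_zero_of_mul_eq_of_isIdempotentElem_sub (he : IsIdempotentElem e) (hex : e * x = x)
    {s : R} (hs : (x - x * x + x * b * e) * s = e) : e = 0 := by
  have he_eq : e = (b * b * e - b * e * (x - e)) * s := by
    rw [mul_assoc b e, mul_sub e, hex, he.eq, mul_self_mul_eq_of_isIdempotentElem_sub hxe hf,
      add_sub_cancel_right, hs]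
  refine hb.eq_zero_of_subset_smul (S := Set.range fun t : R × R => e * t.1 + b * e * t.2) ?_
    ⟨(1, 0), by simp⟩
  rintro _ ⟨⟨t, t'⟩, rfl⟩
  refine ⟨e * (t' - (x - e) * s * t) + b * e * (s * t), ⟨(_, _), rfl⟩, ?_⟩
  have het : e * t = (b * b * e - b * e * (x - e)) * s * t := by rw [← he_eq]
  simp only [smul_eq_mul, het]
  noncomm_ring

theorem mul_eq_zero_of_isIdempotentElem_sub {s : R} (hγ : x - x * x + x * b * e = 0)
    (hs : (x - e) * s = e) : b * e = 0 := by
  have hbe : b * e = b * (b * e * s) := by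
    rw [← mul_assoc, ← mul_assoc, mul_self_mul_eq_of_isIdempotentElem_sub hxe hf, hγ, zero_add,
      mul_assoc, hs]
  refine hb.eq_zero_of_subset_smul (S := Set.range (b * e * ·)) ?_ ⟨1, mul_one _⟩
  rintro _ ⟨t, rfl⟩
  refine ⟨b * e * s * t, ⟨s * t, by simp only [mul_assoc]⟩, ?_⟩
  calc b • (b * e * s * t) = b * (b * e * s) * t := by simp only [smul_eq_mul, mul_assoc]
    _ = b * e * t := by rw [← hbe]

theorem IsIdempotentElem.of_isNilpotent_sub_of_mem_corner (he : IsIdempotentElem e)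
    (hcorner : ∀ r, e * r * e ≠ 0 → ∃ s, e * r * e * s = e) (hex : e * x = x) :
    IsIdempotentElem x := by
  by_cases hγ : x - x * x + x * b * e = 0
  · by_cases hxe' : x = e
    · exact hxe' ▸ he
    have hcorner_sub : e * (x - e) * e = x - e := by
      rw [mul_sub, hex, he.eq, sub_mul, hxe, he.eq]
    obtain ⟨s, hs⟩ := hcorner (x - e) (by rwa [hcorner_sub, sub_ne_zero])
    rw [hcorner_sub] at hs
    have hbe := mul_eq_zero_of_isIdempotentElem_sub hxe hb hf hγ hs
    rw [mul_assoc x, hbe, mul_zero, add_zero, sub_eq_zero] at hγ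
    exact hγ.symm
  · have hcorner_γ : e * (x - x * x + x * b * e) * e = x - x * x + x * b * e := by
      simp only [mul_sub, sub_mul, mul_add, add_mul, ← mul_assoc, hex, hxe]
      simp only [mul_assoc, hxe, he.eq]
    obtain ⟨s, hs⟩ := hcorner _ (by rwa [hcorner_γ])
    rw [hcorner_γ] at hs
    rw [← hex, eq_zero_of_mul_eq_of_isIdempotentElem_sub hxe hb hf he hex hs, zero_mul]
    exact IsIdempotentElem.zero

end Corner

namespace Matrix

variable {ι D : Type*} [Fintype ι] [DecidableEq ι] [DivisionRing D]

theorem exists_mul_eq_single_one_of_single_mul_mul_single_ne_zero (i : ι) (r : Matrix ι ι D)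
    (hr : single i i 1 * r * single i i 1 ≠ 0) :
    ∃ s, single i i 1 * r * single i i 1 * s = single i i 1 := by
  rw [single_mul_mul_single, one_mul, mul_one] at hr ⊢
  refine ⟨single i i (r i i)⁻¹, ?_⟩
  rw [single_mul_single_same, mul_inv_cancel₀ fun h ↦ hr (by rw [h, single_zero])]

theorem isIdempotentElem_of_isIdempotentElem_single_sub (i : ι) {a : D} {b : Matrix ι ι D}
    (hb : IsNilpotent b) (hf : IsIdempotentElem (single i i a - b)) : IsIdempotentElem a := by
  have h := IsIdempotentElem.of_isNilpotent_sub_of_mem_corner (e := single i i 1)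
    (by simp) hb hf (by simp [IsIdempotentElem])
    (exists_mul_eq_single_one_of_single_mul_mul_single_ne_zero i) (by simp)
  exact (by simpa using congrFun₂ h.eq i i : a * a = a)

end Matrix

theorem weaklyNilClean_matrix_card_le_three {D : Type*} [DivisionRing D] {n : ℕ}
    (hn : 1 ≤ n) (h : IsWeaklyNilClean (Matrix (Fin n) (Fin n) D)) :
    Cardinal.mk D ≤ 3 := by
  have hmem : ∀ a : D, a = 0 ∨ a = 1 ∨ a = -1 := by
    intro a
    obtain ⟨b, f, hb, hf, hsum | hdiff⟩ := h (single ⟨0, hn⟩ ⟨0, hn⟩ a)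
    · have ha := isIdempotentElem_of_isIdempotentElem_single_sub ⟨0, hn⟩ hb
        (by rwa [hsum, add_sub_cancel_left])
      rcases IsIdempotentElem.iff_eq_zero_or_one.mp ha with rfl | rfl <;> simp
    · have ha := isIdempotentElem_of_isIdempotentElem_single_sub ⟨0, hn⟩ hb.neg (a := -a)
        (by rwa [← single_neg, hdiff, neg_sub, sub_neg_eq_add, sub_add_cancel])
      rcases IsIdempotentElem.iff_eq_zero_or_one.mp ha with ha0 | ha1
      · simp [neg_eq_zero.mp ha0]
      · simp [neg_eq_iff_eq_neg.mp ha1]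
  have hsurj : Function.Surjective ![(0 : D), 1, -1] := fun a ↦ by
    rcases hmem a with rfl | rfl | rfl
    exacts [⟨0, rfl⟩, ⟨1, rfl⟩, ⟨2, rfl⟩]
  simpa using Cardinal.lift_mk_le_lift_mk_of_surjective hsurj
end
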